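/- Let n be a positive integer, let d ≥ 1, and let a be an integer with 1 ≤ a ≤ C(n+d-1, d). Then the sum of the first a entries of [n]^d equals a^{⟨d⟩}. -/
import Mathlib


/-- The expansion `[σ]` of a finite sequence of positive integers. -/
def expand (σ : List ℕ) : List ℕ := (σ.map fun a => List.range' 1 a).flatten

/-- The Macaulay operator `h ↦ h^{⟨i⟩}`: if
`h = C(m_i,i) + C(m_{i-1},i-1) + … + C(m_j,j)` (with `m_i > … > m_j ≥ j ≥ 1`) is the
`i`-binomial expansion of `h > 0`, then
`h^{⟨i⟩} = C(m_i+1,i+1) + C(m_{i-1}+1,i) + … + C(m_j+1,j+1)`; and `0^{⟨i⟩} = 0`.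
It is computed greedily: `m_i` is the largest `m` with `C(m,i) ≤ h`. -/
def macaulay : ℕ → ℕ → ℕ
  | _, 0 => 0
  | 0, _ + 1 => 0
  | i + 1, h + 1 =>
    let m := Nat.findGreatest (fun m => m.choose (i + 1) ≤ h + 1) (h + i + 2)
    (m + 1).choose (i + 2) + macaulay i (h + 1 - m.choose (i + 1))

lemma expand_append (σ τ : List ℕ) : expand (σ ++ τ) = expand σ ++ expand τ := by
  simp [expand]

lemma expand_iterate_append (e : ℕ) (σ τ : List ℕ) :
    expand^[e] (σ ++ τ) = expand^[e] σ ++ expand^[e] τ := by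
  induction e generalizing σ τ with
  | zero => simp
  | succ e ih => rw [Function.iterate_succ_apply, Function.iterate_succ_apply,
      Function.iterate_succ_apply, expand_append, ih]

lemma expand_single (n : ℕ) : expand [n] = List.range' 1 n := by simp [expand]

lemma expand_one (n : ℕ) : expand^[1] [n] = List.range' 1 n := by
  rw [Function.iterate_one, expand_single]

lemma expand_iterate_nil (e : ℕ) : expand^[e] ([] : List ℕ) = [] := by
  induction e with
  | zero => rfl
  | succ k ihk =>
    rw [Function.iterate_succ_apply, show expand ([] : List ℕ) = [] by simp [expand], ihk]

lemma expand_iterate_zero_single (e : ℕ) : expand^[e + 1] [0] = [] := by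
  rw [Function.iterate_succ_apply, show expand [0] = [] by simp [expand], expand_iterate_nil]

lemma expand_key (e n : ℕ) :
    expand^[e + 1] [n + 1] = expand^[e + 1] [n] ++ expand^[e] [n + 1] := by
  rw [Function.iterate_succ_apply, Function.iterate_succ_apply, expand_single, expand_single]
  have : List.range' 1 (n + 1) = List.range' 1 n ++ [n + 1] := by
    rw [List.range'_concat]; norm_num [Nat.add_comm]
  rw [this, expand_iterate_append]

/-- Length of `[n]^{e+1}` is `C(n+e, e+1)`. -/
lemma expand_length : ∀ e n : ℕ, (expand^[e + 1] [n]).length = (n + e).choose (e + 1) := by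
  intro e
  induction e with
  | zero => intro n; rw [expand_one]; simp
  | succ e ih =>
    intro n
    induction n with
    | zero =>
      rw [expand_iterate_zero_single]
      simp [Nat.choose_eq_zero_of_lt]
    | succ n ihn =>
      rw [expand_key, List.length_append, ihn, ih]
      have h1 : n + 1 + (e + 1) = (n + (e + 1)) + 1 := by omega
      have h2 : n + 1 + e = n + (e + 1) := by omega
      rw [h1, h2, Nat.choose_succ_succ' (n + (e + 1)) (e + 1)]
      omega

/-- Sum of all entries of `[n]^e` is `C(n+e, e+1)`. -/
lemma expand_sum : ∀ e n : ℕ, (expand^[e] [n]).sum = (n + e).choose (e + 1) := by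
  intro e
  induction e with
  | zero => intro n; simp
  | succ e ih =>
    intro n
    induction n with
    | zero =>
      rw [expand_iterate_zero_single]
      simp [Nat.choose_eq_zero_of_lt]
    | succ n ihn =>
      rw [expand_key, List.sum_append, ihn, ih]
      have h1 : n + 1 + (e + 1) = (n + (e + 1)) + 1 := by omega
      have h2 : n + 1 + e = n + (e + 1) := by omega
      rw [h1, h2, Nat.choose_succ_succ' (n + (e + 1)) (e + 1)]
      omega

lemma macaulay_zero (d : ℕ) : macaulay d 0 = 0 := by
  cases d <;> rfl

lemma le_add_choose : ∀ m k : ℕ, m ≤ k + 1 + m.choose (k + 1) := by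
  intro m k
  induction m with
  | zero => exact Nat.zero_le _
  | succ m ih =>
    rcases le_or_gt (m + 1) (k + 1) with h | h
    · exact le_trans h (Nat.le_add_right _ _)
    · have hk : k ≤ m := by omega
      have h1 : 0 < m.choose k := Nat.choose_pos hk
      have h2 : (m + 1).choose (k + 1) = m.choose k + m.choose (k + 1) :=
        Nat.choose_succ_succ' m k
      omega

/-- Core recursion for the Macaulay operator. -/
lemma macaulay_core (d m a : ℕ) (ha : 0 < a) (h1 : m.choose (d + 1) ≤ a)
    (h2 : a < (m + 1).choose (d + 1)) :
    macaulay (d + 1) a = (m + 1).choose (d + 2) + macaulay d (a - m.choose (d + 1)) := by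
  obtain ⟨h, rfl⟩ : ∃ h, a = h + 1 := ⟨a - 1, by omega⟩
  have hfg : Nat.findGreatest (fun m => m.choose (d + 1) ≤ h + 1) (h + d + 2) = m := by
    apply le_antisymm
    · by_contra hc
      push_neg at hc
      set g := Nat.findGreatest (fun m => m.choose (d + 1) ≤ h + 1) (h + d + 2) with hg
      have hgne : g ≠ 0 := by omega
      have hP : g.choose (d + 1) ≤ h + 1 :=
        Nat.findGreatest_of_ne_zero (P := fun m => m.choose (d + 1) ≤ h + 1) hg.symm hgne
      have : (m + 1).choose (d + 1) ≤ g.choose (d + 1) := Nat.choose_le_choose _ (by omega)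
      omega
    · apply Nat.le_findGreatest (P := fun m => m.choose (d + 1) ≤ h + 1) _ h1
      have := le_add_choose m d
      omega
  rw [macaulay]
  simp only [hfg]

lemma macaulay_choose (d m : ℕ) (h : d + 1 ≤ m) :
    macaulay (d + 1) (m.choose (d + 1)) = (m + 1).choose (d + 2) := by
  have hpos : 0 < m.choose (d + 1) := Nat.choose_pos h
  have hlt : m.choose (d + 1) < (m + 1).choose (d + 1) := by
    have h2 : (m + 1).choose (d + 1) = m.choose d + m.choose (d + 1) :=
      Nat.choose_succ_succ' m d
    have : 0 < m.choose d := Nat.choose_pos (by omega)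
    omega
  rw [macaulay_core d m _ hpos le_rfl hlt, Nat.sub_self, macaulay_zero, Nat.add_zero]

lemma main_aux : ∀ d : ℕ, ∀ n a : ℕ, 0 < a → a ≤ (expand^[d + 1] [n]).length →
    ((expand^[d + 1] [n]).take a).sum = macaulay (d + 1) a := by
  intro d
  induction d with
  | zero =>
    intro n a ha hle
    rw [expand_one] at hle ⊢
    simp only [List.length_range'] at hle
    have htake : (List.range' 1 n).take a = List.range' 1 a := by
      have : List.range' 1 n = List.range' 1 a ++ List.range' (1 + a) (n - a) := by
        rw [List.range'_append_1]
        congr 1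
        omega
      rw [this, List.take_append]
      simp
    rw [htake, ← expand_one, expand_sum]
    obtain ⟨h, rfl⟩ : ∃ h, a = h + 1 := ⟨a - 1, by omega⟩
    rw [macaulay_core 0 (h + 1) (h + 1) ha (by simp) (by simp)]
    rw [Nat.choose_one_right, Nat.sub_self, macaulay_zero, Nat.add_zero]
    norm_num
  | succ d ih =>
    intro n
    induction n with
    | zero =>
      intro a ha hle
      rw [expand_length] at hle
      rw [Nat.choose_eq_zero_of_lt (by omega)] at hle
      omega
    | succ n ihn =>
      intro a ha hle
      have hkey := expand_key (d + 1) n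
      have hL : (expand^[d + 1 + 1] [n]).length = (n + d + 1).choose (d + 2) :=
        expand_length (d + 1) n
      have hL2 : (expand^[d + 1] [n + 1]).length = (n + d + 1).choose (d + 1) := by
        rw [expand_length, show n + 1 + d = n + d + 1 from by omega]
      rw [hkey]
      rcases le_or_gt a ((expand^[d + 1 + 1] [n]).length) with h | h
      · rw [List.take_append, Nat.sub_eq_zero_of_le h, List.take_zero,
          List.append_nil]
        exact ihn a ha h
      · rw [List.take_append, List.take_of_length_le (le_of_lt h),
          List.sum_append, hL]
        rw [hL] at h
        have hlen : a ≤ (n + d + 1).choose (d + 2) + (n + d + 1).choose (d + 1) := by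
          rw [hkey, List.length_append, hL, hL2] at hle
          omega
        have hp : (n + d + 2).choose (d + 2)
            = (n + d + 1).choose (d + 1) + (n + d + 1).choose (d + 2) :=
          Nat.choose_succ_succ' (n + d + 1) (d + 1)
        have hup : a ≤ (n + d + 2).choose (d + 2) := by omega
        have hsum1 : (expand^[d + 1 + 1] [n]).sum = (n + d + 2).choose (d + 3) := by
          have := expand_sum (d + 2) n
          rw [show n + (d + 2) = n + d + 2 by omega] at this
          exact this
        have hsum2 : ((expand^[d + 1] [n + 1]).take (a - (n + d + 1).choose (d + 2))).sum
            = macaulay (d + 1) (a - (n + d + 1).choose (d + 2)) :=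
          ih (n + 1) _ (by omega) (by rw [hL2]; omega)
        rw [hsum1, hsum2]
        rcases lt_or_eq_of_le hup with hlt | heq
        · have hc : macaulay (d + 1 + 1) a = (n + d + 2).choose (d + 3)
              + macaulay (d + 1) (a - (n + d + 1).choose (d + 2)) :=
            macaulay_core (d + 1) (n + d + 1) a ha (le_of_lt h) hlt
          rw [hc]
        · have hfull : a - (n + d + 1).choose (d + 2) = (n + d + 1).choose (d + 1) := by
            omega
          rw [hfull, heq]
          have hm1 : macaulay (d + 1) ((n + d + 1).choose (d + 1))
              = (n + d + 2).choose (d + 2) := macaulay_choose d (n + d + 1) (by omega)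
          have hm2 : macaulay (d + 1 + 1) ((n + d + 2).choose (d + 2))
              = (n + d + 3).choose (d + 3) := macaulay_choose (d + 1) (n + d + 2) (by omega)
          have hp2 : (n + d + 3).choose (d + 3)
              = (n + d + 2).choose (d + 2) + (n + d + 2).choose (d + 3) :=
            Nat.choose_succ_succ' (n + d + 2) (d + 2)
          rw [hm1, hm2]
          omega

/-- Let `n ≥ 1`, `d ≥ 1` and `1 ≤ a ≤ C(n+d-1, d)`.  Then the sum of the first `a`
entries of `[n]^d` equals `a^{⟨d⟩}`.  Here `[n]^d = expand^[d] [n]`. -/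
theorem sum_take_iterated_expansion (n d a : ℕ) (hn : 0 < n) (hd : 0 < d)
    (ha : 0 < a) (hle : a ≤ (n + d - 1).choose d) :
    ((expand^[d] [n]).take a).sum = macaulay d a := by
  obtain ⟨d, rfl⟩ : ∃ d', d = d' + 1 := ⟨d - 1, by omega⟩
  apply main_aux d n a ha
  rw [expand_length]
  have : n + (d + 1) - 1 = n + d := by omega
  rwa [this] at hle
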